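/- In the Hitting-Set-to-plurality-DCUDC construction, if B' ⊆ B is a hitting set of S with |B'| ≤ k, then deleting the candidate set D = B \ B' makes w the unique plurality winner: score(w) = 2(m−k') + 2n(k+1) + 5 ≥ 2(m−k) + 2n(k+1) + 5 > score(c) = 2(m−k) + 2n(k+1) + 4, where k' = |B'| — more precisely, in the election (C \ D, V) the score of w strictly exceeds the score of c and the score of every remaining b_j. -/

import Mathlib

/-- Candidates for the Hitting-Set construction: `B = Fin m` together with the
two special candidates `c` and `w`. -/
abbrev HCand (m : ℕ) := Fin m ⊕ Bool

/-- The distinguished candidate `c`. -/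
def hcand {m : ℕ} : HCand m := Sum.inr true

/-- The candidate `w`. -/
def hwand {m : ℕ} : HCand m := Sum.inr false

/-- The candidate `b_j`. -/
def hb {m : ℕ} (j : Fin m) : HCand m := Sum.inl j

/-- A vote is a preference list (most preferred first); its top choice after
deleting the candidates in `D` is the first surviving entry. -/
def topAfter {C : Type*} [DecidableEq C] (D : Finset C) (l : List C) : Option C :=
  (l.filter (fun c => decide (c ∉ D))).head?

/-- Plurality score of candidate `c` after deleting `D`. -/
def plScore {C : Type*} [DecidableEq C] (votes : List (List C)) (D : Finset C)
    (c : C) : ℕ :=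
  votes.countP (fun l => decide (topAfter D l = some c))

/-- Vote `c > w > ⋯`. -/
def hv1 (m : ℕ) : List (HCand m) := [hcand, hwand] ++ (List.finRange m).map hb

/-- Vote `w > c > ⋯`. -/
def hv2 (m : ℕ) : List (HCand m) := [hwand, hcand] ++ (List.finRange m).map hb

/-- Vote `S_i > c > ⋯` (members of `S_i`, then `c`, then the rest). -/
noncomputable def hv3 {m n : ℕ} (S : Fin n → Finset (Fin m)) (i : Fin n) :
    List (HCand m) :=
  ((S i).toList.map hb) ++ [hcand] ++
    (Finset.univ.toList.filter
      (fun x : HCand m => decide (x ∉ ((S i).image hb ∪ {hcand}))))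

/-- Vote `b_j > w > ⋯`. -/
noncomputable def hv4 {m : ℕ} (j : Fin m) : List (HCand m) :=
  [hb j, hwand] ++
    (Finset.univ.toList.filter
      (fun x : HCand m => decide (x ∉ ({hb j, hwand} : Finset (HCand m)))))

/-- The votes of the constructed election: `2(m-k)+2n(k+1)+4` votes `c > w > ⋯`,
`2n(k+1)+5` votes `w > c > ⋯`, for each `i` `2(k+1)` votes `S_i > c > ⋯`, and
for each `j` two votes `b_j > w > ⋯`. -/
noncomputable def hsVotes {m n : ℕ} (S : Fin n → Finset (Fin m)) (k : ℕ) :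
    List (List (HCand m)) :=
  List.replicate (2 * (m - k) + 2 * n * (k + 1) + 4) (hv1 m) ++
    List.replicate (2 * n * (k + 1) + 5) (hv2 m) ++
    (((List.finRange n).map (fun i => List.replicate (2 * (k + 1)) (hv3 S i))).flatten) ++
    (((List.finRange m).map (fun j => List.replicate 2 (hv4 j))).flatten)

/-!
Deleting `B \ B'` leaves every `S_i > c` ballot topped by a surviving member of the hitting
set `B'`, so `c` keeps only its own `2(m-k)+2n(k+1)+4` first places, whereas `w` gains the two
`b_j > w` ballots of each of the `m - |B'| ≥ m - k` deleted `b_j`. A surviving `b_j` can collect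
at most the `2(k+1)n` ballots of the sets and its own two, fewer than the `2n(k+1)+5` of `w`.
-/

open Finset

section Plurality

variable {C : Type*} [DecidableEq C] {D : Finset C}

theorem topAfter_cons_of_notMem {c : C} (hc : c ∉ D) (l : List C) :
    topAfter D (c :: l) = some c := by
  simp [topAfter, hc]

theorem topAfter_cons_of_mem {c : C} (hc : c ∈ D) (l : List C) :
    topAfter D (c :: l) = topAfter D l := by
  simp [topAfter, hc]

theorem mem_of_topAfter_eq_some {l : List C} {x : C} (h : topAfter D l = some x) : x ∈ l :=
  (List.mem_filter.mp (List.mem_of_mem_head? h)).1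

theorem exists_topAfter_append_eq_of_mem {l₁ l₂ : List C} {c : C} (hc : c ∈ l₁)
    (hcD : c ∉ D) : ∃ x ∈ l₁, topAfter D (l₁ ++ l₂) = some x := by
  obtain ⟨x, hx⟩ := Option.isSome_iff_exists.mp <| List.isSome_head?.mpr <|
    List.ne_nil_of_mem <|
      (List.mem_filter (p := fun c => decide (c ∉ D))).mpr ⟨hc, decide_eq_true hcD⟩
  refine ⟨x, mem_of_topAfter_eq_some hx, ?_⟩
  rw [topAfter, List.filter_append, List.head?_append, hx, Option.some_or]

theorem plScore_append (V₁ V₂ : List (List C)) (x : C) :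
    plScore (V₁ ++ V₂) D x = plScore V₁ D x + plScore V₂ D x :=
  List.countP_append ..

theorem plScore_replicate (r : ℕ) (l : List C) (x : C) :
    plScore (List.replicate r l) D x = if topAfter D l = some x then r else 0 := by
  simp [plScore, List.countP_replicate]

theorem plScore_flatten_map_replicate {ι : Type*} (L : List ι) (r : ℕ) (f : ι → List C)
    (x : C) :
    plScore (L.map fun a => List.replicate r (f a)).flatten D x =
      r * L.countP fun a => topAfter D (f a) = some x := by
  induction L with
  | nil => simp [plScore]
  | cons a L ih =>
    rw [List.map_cons, List.flatten_cons, plScore_append, ih, plScore_replicate,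
      List.countP_cons]
    by_cases h : topAfter D (f a) = some x <;> simp [h, Nat.mul_add, Nat.add_comm]

end Plurality

theorem List.countP_finRange {n : ℕ} (p : Fin n → Prop) [DecidablePred p] :
    (List.finRange n).countP p = #{i | p i} := by
  rw [← (List.nodup_finRange n).card_eq_countP, List.toFinset_finRange]

section HittingSet

variable {m n : ℕ}

theorem plScore_hsVotes (S : Fin n → Finset (Fin m)) (k : ℕ) (D : Finset (HCand m))
    (x : HCand m) :
    plScore (hsVotes S k) D x =
      (if topAfter D (hv1 m) = some x then 2 * (m - k) + 2 * n * (k + 1) + 4 else 0) +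
      (if topAfter D (hv2 m) = some x then 2 * n * (k + 1) + 5 else 0) +
      2 * (k + 1) * #{i | topAfter D (hv3 S i) = some x} +
      2 * #{j | topAfter D (hv4 j) = some x} := by
  simp only [hsVotes, plScore_append, plScore_replicate, plScore_flatten_map_replicate,
    List.countP_finRange]

theorem hb_ne_hcand (j : Fin m) : hb j ≠ hcand := Sum.inl_ne_inr

theorem hb_ne_hwand (j : Fin m) : hb j ≠ hwand := Sum.inl_ne_inr

theorem hcand_ne_hwand : (hcand : HCand m) ≠ hwand := by simp [hcand, hwand]

def hsDeletion (B' : Finset (Fin m)) : Finset (HCand m) := (univ \ B').image hb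

variable {B' : Finset (Fin m)}

theorem hcand_notMem_hsDeletion : hcand ∉ hsDeletion B' := by
  simp [hsDeletion, hcand, hb]

theorem hwand_notMem_hsDeletion : hwand ∉ hsDeletion B' := by
  simp [hsDeletion, hwand, hb]

theorem hb_mem_hsDeletion {j : Fin m} : hb j ∈ hsDeletion B' ↔ j ∉ B' := by
  simp [hsDeletion, hb]

theorem hb_notMem_hsDeletion {j : Fin m} (hj : j ∈ B') : hb j ∉ hsDeletion B' :=
  hb_mem_hsDeletion.not.mpr (not_not.mpr hj)

theorem topAfter_hv1 : topAfter (hsDeletion B') (hv1 m) = some hcand :=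
  topAfter_cons_of_notMem hcand_notMem_hsDeletion _

theorem topAfter_hv2 : topAfter (hsDeletion B') (hv2 m) = some hwand :=
  topAfter_cons_of_notMem hwand_notMem_hsDeletion _

theorem exists_topAfter_hv3 (S : Fin n → Finset (Fin m)) {i : Fin n}
    (hi : (S i ∩ B').Nonempty) :
    ∃ j, topAfter (hsDeletion B') (hv3 S i) = some (hb j) := by
  obtain ⟨b, hbi⟩ := hi
  obtain ⟨hbS, hbB'⟩ := mem_inter.mp hbi
  obtain ⟨x, hx, htop⟩ := exists_topAfter_append_eq_of_mem (l₂ := [hcand] ++ _)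
    (List.mem_map_of_mem (f := hb) (mem_toList.mpr hbS))
    (hb_notMem_hsDeletion hbB')
  obtain ⟨j, -, rfl⟩ := List.mem_map.mp hx
  exact ⟨j, by rw [hv3, List.append_assoc, htop]⟩

theorem topAfter_hv4 (j : Fin m) :
    topAfter (hsDeletion B') (hv4 j) = some (if j ∈ B' then hb j else hwand) := by
  by_cases hj : j ∈ B'
  · rw [if_pos hj, hv4, List.cons_append]
    exact topAfter_cons_of_notMem (hb_notMem_hsDeletion hj) _
  · rw [if_neg hj, hv4, List.cons_append, topAfter_cons_of_mem (hb_mem_hsDeletion.mpr hj)]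
    exact topAfter_cons_of_notMem hwand_notMem_hsDeletion _

theorem card_topAfter_hv3_eq_zero {S : Fin n → Finset (Fin m)}
    (hhit : ∀ i, (S i ∩ B').Nonempty) {x : HCand m} (hx : ∀ j, hb j ≠ x) :
    #{i | topAfter (hsDeletion B') (hv3 S i) = some x} = 0 := by
  refine card_eq_zero.mpr (filter_eq_empty_iff.mpr fun i _ => ?_)
  obtain ⟨j, hj⟩ := exists_topAfter_hv3 S (hhit i)
  simpa [hj] using hx j

theorem card_topAfter_hv4_eq_hwand :
    #{j | topAfter (hsDeletion B') (hv4 j) = some hwand} = m - #B' := by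
  simp_rw [topAfter_hv4, Option.some_inj, ite_eq_right_iff, hb_ne_hwand, imp_false,
    filter_notMem_eq_sdiff, card_univ_sdiff, Fintype.card_fin]

theorem card_topAfter_hv4_eq_hcand :
    #{j | topAfter (hsDeletion B') (hv4 j) = some hcand} = 0 := by
  refine card_eq_zero.mpr (filter_eq_empty_iff.mpr fun j _ => ?_)
  rw [topAfter_hv4]
  split_ifs
  exacts [Option.some_inj.not.mpr (hb_ne_hcand j), Option.some_inj.not.mpr hcand_ne_hwand.symm]

theorem card_topAfter_hv4_eq_hb_le_one (j : Fin m) :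
    #{j' | topAfter (hsDeletion B') (hv4 j') = some (hb j)} ≤ 1 := by
  refine card_le_one.mpr fun a ha a' ha' => ?_
  simp only [mem_filter, mem_univ, true_and, topAfter_hv4] at ha ha'
  split_ifs at ha ha' <;> simp_all [hb, hwand]

variable {S : Fin n → Finset (Fin m)} (k : ℕ)

theorem plScore_hwand (hhit : ∀ i, (S i ∩ B').Nonempty) :
    plScore (hsVotes S k) (hsDeletion B') hwand = 2 * (m - #B') + 2 * n * (k + 1) + 5 := by
  rw [plScore_hsVotes, topAfter_hv1, topAfter_hv2,
    if_neg (Option.some_inj.not.mpr hcand_ne_hwand), if_pos rfl,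
    card_topAfter_hv3_eq_zero hhit hb_ne_hwand, card_topAfter_hv4_eq_hwand]
  ring

theorem plScore_hcand (hhit : ∀ i, (S i ∩ B').Nonempty) :
    plScore (hsVotes S k) (hsDeletion B') hcand = 2 * (m - k) + 2 * n * (k + 1) + 4 := by
  rw [plScore_hsVotes, topAfter_hv1, topAfter_hv2, if_pos rfl,
    if_neg (Option.some_inj.not.mpr hcand_ne_hwand.symm),
    card_topAfter_hv3_eq_zero hhit hb_ne_hcand, card_topAfter_hv4_eq_hcand]
  ring

theorem plScore_hb_le (j : Fin m) :
    plScore (hsVotes S k) (hsDeletion B') (hb j) ≤ 2 * n * (k + 1) + 2 := by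
  have hv3_count : #{i | topAfter (hsDeletion B') (hv3 S i) = some (hb j)} ≤ n :=
    (card_filter_le _ _).trans (card_fin n).le
  rw [plScore_hsVotes, topAfter_hv1, topAfter_hv2,
    if_neg (Option.some_inj.not.mpr (hb_ne_hcand j).symm),
    if_neg (Option.some_inj.not.mpr (hb_ne_hwand j).symm)]
  nlinarith [card_topAfter_hv4_eq_hb_le_one (B' := B') j]

end HittingSet

theorem stmt12_general {m n : ℕ} (S : Fin n → Finset (Fin m))
    (k : ℕ)
    (B' : Finset (Fin m)) (hhit : ∀ i, (S i ∩ B').Nonempty) (hcard : B'.card ≤ k)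
    (D : Finset (HCand m)) (hD : D = (Finset.univ \ B').image hb) :
    plScore (hsVotes S k) D hwand = 2 * (m - B'.card) + 2 * n * (k + 1) + 5 ∧
    plScore (hsVotes S k) D hcand = 2 * (m - k) + 2 * n * (k + 1) + 4 ∧
    plScore (hsVotes S k) D hcand < plScore (hsVotes S k) D hwand ∧
    (∀ j ∈ B', plScore (hsVotes S k) D (hb j) < plScore (hsVotes S k) D hwand) := by
  change D = hsDeletion B' at hD
  subst hD
  have hw := plScore_hwand k hhit
  have hc := plScore_hcand k hhit
  refine ⟨hw, hc, by omega, fun j _ => ?_⟩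
  have := plScore_hb_le (S := S) (B' := B') k j
  omega

/-- In the Hitting-Set-to-plurality-DCUDC construction, if `B'` is a hitting set
of `S` with `|B'| ≤ k`, then deleting `D = B \ B'` gives `w` score
`2(m - |B'|) + 2n(k+1) + 5`, gives `c` score `2(m-k) + 2n(k+1) + 4`, and `w`'s
score strictly exceeds the score of `c` and of every remaining `b_j`. -/
theorem stmt12 {m n : ℕ} (S : Fin n → Finset (Fin m))
    (k : ℕ) (hk : 0 < k) (hkm : k ≤ m)
    (B' : Finset (Fin m)) (hhit : ∀ i, (S i ∩ B').Nonempty) (hcard : B'.card ≤ k)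
    (D : Finset (HCand m)) (hD : D = (Finset.univ \ B').image hb) :
    plScore (hsVotes S k) D hwand = 2 * (m - B'.card) + 2 * n * (k + 1) + 5 ∧
    plScore (hsVotes S k) D hcand = 2 * (m - k) + 2 * n * (k + 1) + 4 ∧
    plScore (hsVotes S k) D hcand < plScore (hsVotes S k) D hwand ∧
    (∀ j ∈ B', plScore (hsVotes S k) D (hb j) < plScore (hsVotes S k) D hwand) :=
  stmt12_general S k B' hhit hcard D hD
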